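/- Let f be a fitness function on the biallelic hypercube {0,1}^L with no two adjacent genotypes having equal fitness, and suppose the landscape contains no reciprocal sign epistasis motif (every square motif is ME or SSE). Then the landscape has a unique peak, and every genotype has at least one direct accessible path to that peak. -/
import Mathlib


/-- Flip coordinate `i` of a biallelic genotype. -/
def flp {L : ℕ} (g : Fin L → Bool) (i : Fin L) : Fin L → Bool :=
  Function.update g i (!g i)

/-- Hamming distance between genotypes. -/
def hamming {L : ℕ} (g h : Fin L → Bool) : ℕ :=
  (Finset.univ.filter fun i => g i ≠ h i).card

/-- Endpoint of the path obtained by applying a list of coordinate flips. -/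
def walk {L : ℕ} (g : Fin L → Bool) : List (Fin L) → (Fin L → Bool)
  | [] => g
  | i :: l => walk (flp g i) l

/-- A path (list of flips) is accessible if fitness strictly increases at every step. -/
def Accessible {L : ℕ} (f : (Fin L → Bool) → ℝ) : (Fin L → Bool) → List (Fin L) → Prop
  | _, [] => True
  | g, i :: l => f g < f (flp g i) ∧ Accessible f (flp g i) l

/-- Mutation `i` changes the sign of its fitness effect depending on the presence of
mutation `j`. -/
def SignFlip {L : ℕ} (f : (Fin L → Bool) → ℝ) (g : Fin L → Bool) (i j : Fin L) : Prop :=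
  ¬ ((f g < f (flp g i)) ↔ (f (flp g j) < f (flp (flp g j) i)))

/-- Simple sign epistasis on the square motif at background `g`, loci `i ≠ j`:
exactly one of the two mutations changes sign. -/
def SSE {L : ℕ} (f : (Fin L → Bool) → ℝ) (g : Fin L → Bool) (i j : Fin L) : Prop :=
  Xor' (SignFlip f g i j) (SignFlip f g j i)

/-- Reciprocal sign epistasis: both mutations change sign. -/
def RSE {L : ℕ} (f : (Fin L → Bool) → ℝ) (g : Fin L → Bool) (i j : Fin L) : Prop :=
  SignFlip f g i j ∧ SignFlip f g j i

/-- A peak (local fitness maximum). -/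
def Peak {L : ℕ} (f : (Fin L → Bool) → ℝ) (g : Fin L → Bool) : Prop :=
  ∀ i, f (flp g i) < f g

section Aux

variable {L : ℕ}

lemma flp_apply (g : Fin L → Bool) (i k : Fin L) :
    flp g i k = if k = i then !(g i) else g k := by
  simp [flp, Function.update_apply]

lemma flp_flp (g : Fin L → Bool) (i : Fin L) : flp (flp g i) i = g := by
  funext k
  by_cases h : k = i <;> simp [flp_apply, h]

lemma flp_comm (g : Fin L → Bool) {i j : Fin L} (h : i ≠ j) :
    flp (flp g i) j = flp (flp g j) i := by
  funext k
  by_cases hki : k = i <;> by_cases hkj : k = j <;>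
    simp_all [flp_apply]

lemma hamming_zero_iff (g p : Fin L → Bool) : hamming g p = 0 ↔ g = p := by
  rw [hamming, Finset.card_eq_zero, Finset.filter_eq_empty_iff]
  constructor
  · intro h; funext k
    have := h (Finset.mem_univ k); simpa using this
  · intro h; subst h; simp

lemma hamming_succ {g p : Fin L → Bool} {i : Fin L} (h : g i ≠ p i) :
    hamming g p = hamming (flp g i) p + 1 := by
  have hmem : i ∈ Finset.univ.filter fun k => g k ≠ p k := by simp [h]
  have hset : (Finset.univ.filter fun k => flp g i k ≠ p k)
      = (Finset.univ.filter fun k => g k ≠ p k).erase i := by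
    ext k
    simp only [Finset.mem_filter, Finset.mem_univ, true_and, Finset.mem_erase]
    by_cases hk : k = i
    · subst hk
      simp only [flp_apply, if_pos rfl]
      revert h; cases g k <;> cases p k <;> simp
    · simp [flp_apply, hk]
  have hcard := Finset.card_erase_of_mem hmem
  have hpos : 0 < (Finset.univ.filter fun k => g k ≠ p k).card :=
    Finset.card_pos.mpr ⟨i, hmem⟩
  rw [hamming, hamming, hset, hcard]
  omega

/-- Core lemma: there are no two genotypes `g ≠ p` such that each is a local
maximum of the subcube spanned by them (all flips toward the other are downhill). -/
lemma core {L : ℕ} (f : (Fin L → Bool) → ℝ)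
    (hne : ∀ (g : Fin L → Bool) (i : Fin L), f (flp g i) ≠ f g)
    (hnorse : ∀ (g : Fin L → Bool) (i j : Fin L), i ≠ j → ¬ RSE f g i j) :
    ∀ d (g p : Fin L → Bool), hamming g p = d → g ≠ p →
      (∀ i, g i ≠ p i → f (flp g i) < f g) →
      (∀ i, g i ≠ p i → f (flp p i) < f p) → False := by
  intro d
  induction d using Nat.strong_induction_on with
  | _ d IH =>
  intro g p hd hgp hgdown hpdown
  obtain ⟨i, hi⟩ : ∃ i, g i ≠ p i := by
    by_contra h; push_neg at h; exact hgp (funext h)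
  have hpos : 1 ≤ d := by
    rcases Nat.eq_zero_or_pos d with h | h
    · exact absurd ((hamming_zero_iff g p).mp (h ▸ hd)) hgp
    · exact h
  set T : Finset (Fin L) := (Finset.univ.filter fun k => g k ≠ p k).erase i with hT
  have hiT : i ∉ T := Finset.notMem_erase i _
  have hTcard : T.card = d - 1 := by
    rw [hT, Finset.card_erase_of_mem (by simp [hi])]
    rw [hamming] at hd; omega
  have hTS : ∀ k, k ∈ T → g k ≠ p k := by
    intro k hk
    have := Finset.mem_of_mem_erase hk
    simpa using this
  have hout : ∀ k, k ∉ T → k ≠ i → g k = p k := by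
    intro k hk hki
    by_contra h
    exact hk (Finset.mem_erase.mpr ⟨hki, by simp [h]⟩)
  have hpbi : p i = !g i := by
    revert hi; cases g i <;> cases p i <;> simp
  -- subcube on the g side
  set Cg : Finset (Fin L → Bool) :=
    Finset.univ.filter (fun v => ∀ k, k ∉ T → v k = g k) with hCg
  have hgCg : g ∈ Cg := by simp [hCg]
  have hCgmem : ∀ v, v ∈ Cg → ∀ k, k ∉ T → v k = g k := by
    intro v hv; simpa [hCg] using hv
  have hflpCg : ∀ v, v ∈ Cg → ∀ j, j ∈ T → flp v j ∈ Cg := by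
    intro v hv j hj
    have hv' := hCgmem v hv
    simp only [hCg, Finset.mem_filter, Finset.mem_univ, true_and]
    intro k hk
    rw [flp_apply]
    have : k ≠ j := fun h => hk (h ▸ hj)
    rw [if_neg this]
    exact hv' k hk
  -- ascent lemma on the p side
  have ascend_p : ∀ x : Fin L → Bool, (∀ k, k ∉ T → x k = p k) → x ≠ p →
      ∃ j, x j ≠ p j ∧ f x < f (flp x j) := by
    intro x hxT hxp
    by_contra hcon
    push_neg at hcon
    have hxdown : ∀ j, x j ≠ p j → f (flp x j) < f x := by
      intro j hj
      exact lt_of_le_of_ne (hcon j hj) (hne x j)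
    have hpdown' : ∀ j, x j ≠ p j → f (flp p j) < f p := by
      intro j hj
      have hjT : j ∈ T := by
        by_contra h; exact hj (hxT j h)
      exact hpdown j (hTS j hjT)
    have hsub : (Finset.univ.filter fun k => x k ≠ p k) ⊆ T := by
      intro k hk
      by_contra h
      have := hxT k h
      simp [this] at hk
    have hlt : hamming x p < d := by
      have := Finset.card_le_card hsub
      rw [hamming]; omega
    exact IH (hamming x p) hlt x p rfl hxp hxdown hpdown'
  -- ascent lemma on the g side
  have ascend_g : ∀ y : Fin L → Bool, (∀ k, k ∉ T → y k = g k) → y ≠ g →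
      ∃ j, y j ≠ g j ∧ f y < f (flp y j) := by
    intro y hyT hyg
    by_contra hcon
    push_neg at hcon
    have hydown : ∀ j, y j ≠ g j → f (flp y j) < f y := by
      intro j hj
      exact lt_of_le_of_ne (hcon j hj) (hne y j)
    have hgdown' : ∀ j, y j ≠ g j → f (flp g j) < f g := by
      intro j hj
      have hjT : j ∈ T := by
        by_contra h; exact hj (hyT j h)
      exact hgdown j (hTS j hjT)
    have hsub : (Finset.univ.filter fun k => y k ≠ g k) ⊆ T := by
      intro k hk
      by_contra h
      have := hyT k h
      simp [this] at hk
    have hlt : hamming y g < d := by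
      have := Finset.card_le_card hsub
      rw [hamming]; omega
    exact IH (hamming y g) hlt y g rfl hyg hydown hgdown'
  -- the bottleneck argmax
  obtain ⟨u, huC, humax⟩ :=
    Finset.exists_max_image Cg (fun v => min (f v) (f (flp v i))) ⟨g, hgCg⟩
  have huT : ∀ k, k ∉ T → u k = g k := hCgmem u huC
  rcases lt_or_gt_of_ne (hne u i) with hA | hA
  · -- Case A : f (flp u i) < f u
    have hxT : ∀ k, k ∉ T → flp u i k = p k := by
      intro k hk
      rw [flp_apply]
      by_cases hki : k = i
      · subst hki
        rw [if_pos rfl, huT k hk, hpbi]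
      · rw [if_neg hki, huT k hk]
        exact hout k hk hki
    have hxp : flp u i ≠ p := by
      intro h
      have hu : u = flp p i := by rw [← h, flp_flp]
      have h1 : f (flp p i) < f p := hpdown i hi
      rw [← hu] at h1
      rw [h] at hA
      exact absurd hA (not_lt.mpr h1.le)
    obtain ⟨j, hxj, hup⟩ := ascend_p (flp u i) hxT hxp
    have hjT : j ∈ T := by
      by_contra h; exact hxj (hxT j h)
    have hji : j ≠ i := fun h => hiT (h ▸ hjT)
    have hwC : flp u j ∈ Cg := hflpCg u huC j hjT
    have hxw : flp (flp u i) j = flp (flp u j) i := flp_comm u hji.symm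
    have hmax := humax (flp u j) hwC
    have hmu : min (f u) (f (flp u i)) = f (flp u i) := min_eq_right hA.le
    rcases lt_or_gt_of_ne (hne (flp u j) i) with hB | hB
    · -- f (flp (flp u j) i) < f (flp u j)
      have hmw : min (f (flp u j)) (f (flp (flp u j) i)) = f (flp (flp u j) i) :=
        min_eq_right hB.le
      rw [hmw, hmu, ← hxw] at hmax
      exact absurd hmax (not_le.mpr hup)
    · -- f (flp u j) < f (flp (flp u j) i)
      have hsf1 : SignFlip f u i j := by
        intro hiff
        exact absurd (hiff.mpr hB) (not_lt.mpr hA.le)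
      have hsf2 : ¬ SignFlip f u j i := fun h => hnorse u i j hji.symm ⟨hsf1, h⟩
      rw [SignFlip, not_not] at hsf2
      have huw : f u < f (flp u j) := hsf2.mpr hup
      have hmw : min (f (flp u j)) (f (flp (flp u j) i)) = f (flp u j) :=
        min_eq_left hB.le
      rw [hmw, hmu] at hmax
      linarith
  · -- Case B : f u < f (flp u i)
    have hug : u ≠ g := by
      intro h
      rw [h] at hA
      exact absurd hA (not_lt.mpr (hgdown i hi).le)
    obtain ⟨j, huj, hup⟩ := ascend_g u huT hug
    have hjT : j ∈ T := by
      by_contra h; exact huj (huT j h)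
    have hji : j ≠ i := fun h => hiT (h ▸ hjT)
    have hwC : flp u j ∈ Cg := hflpCg u huC j hjT
    have hmax := humax (flp u j) hwC
    have hmu : min (f u) (f (flp u i)) = f u := min_eq_left hA.le
    rcases lt_or_gt_of_ne (hne (flp u j) i) with hB | hB
    · -- f (flp (flp u j) i) < f (flp u j)
      have hsf1 : SignFlip f u i j := by
        intro hiff
        exact absurd (hiff.mp hA) (not_lt.mpr hB.le)
      have hsf2 : ¬ SignFlip f u j i := fun h => hnorse u i j hji.symm ⟨hsf1, h⟩
      rw [SignFlip, not_not] at hsf2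
      have h2 : f (flp u i) < f (flp (flp u i) j) := hsf2.mp hup
      rw [flp_comm u hji.symm] at h2
      have hmw : min (f (flp u j)) (f (flp (flp u j) i)) = f (flp (flp u j) i) :=
        min_eq_right hB.le
      rw [hmw, hmu] at hmax
      linarith
    · -- f (flp u j) < f (flp (flp u j) i)
      have hmw : min (f (flp u j)) (f (flp (flp u j) i)) = f (flp u j) :=
        min_eq_left hB.le
      rw [hmw, hmu] at hmax
      linarith

end Aux

/-- with no RSE motif, the landscape has a unique peak and every genotype
has at least one direct accessible path to it. -/
theorem stmt_6 (L : ℕ) (f : (Fin L → Bool) → ℝ)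
    (hne : ∀ (g : Fin L → Bool) (i : Fin L), f (flp g i) ≠ f g)
    (hnorse : ∀ (g : Fin L → Bool) (i j : Fin L), i ≠ j → ¬ RSE f g i j) :
    ∃ p : Fin L → Bool, Peak f p ∧ (∀ q : Fin L → Bool, Peak f q → q = p) ∧
      ∀ g : Fin L → Bool,
        ∃ l : List (Fin L), l.length = hamming g p ∧ walk g l = p ∧ Accessible f g l := by
  obtain ⟨p, -, hpmax⟩ :=
    Finset.exists_max_image (Finset.univ : Finset (Fin L → Bool)) f Finset.univ_nonempty
  have hpeak : Peak f p := fun i =>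
    lt_of_le_of_ne (hpmax _ (Finset.mem_univ _)) (hne p i)
  have huniq : ∀ q : Fin L → Bool, Peak f q → q = p := by
    intro q hq
    by_contra hqp
    exact core f hne hnorse (hamming q p) q p rfl hqp
      (fun i _ => hq i) (fun i _ => hpeak i)
  have step : ∀ g : Fin L → Bool, g ≠ p → ∃ i, g i ≠ p i ∧ f g < f (flp g i) := by
    intro g hg
    by_contra h
    push_neg at h
    refine core f hne hnorse (hamming g p) g p rfl hg ?_ (fun i _ => hpeak i)
    intro i hi
    exact lt_of_le_of_ne (h i hi) (hne g i)
  have path : ∀ d (g : Fin L → Bool), hamming g p = d →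
      ∃ l : List (Fin L), l.length = d ∧ walk g l = p ∧ Accessible f g l := by
    intro d
    induction d with
    | zero =>
      intro g h
      exact ⟨[], rfl, (hamming_zero_iff g p).mp h, trivial⟩
    | succ n ihn =>
      intro g h
      have hg : g ≠ p := by
        intro e
        rw [(hamming_zero_iff g p).mpr e] at h
        omega
      obtain ⟨i, hi, hfi⟩ := step g hg
      have h' : hamming (flp g i) p = n := by
        have := hamming_succ hi
        omega
      obtain ⟨l, hl, hw, ha⟩ := ihn (flp g i) h'
      exact ⟨i :: l, by simp [hl], hw, ⟨hfi, ha⟩⟩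
  exact ⟨p, hpeak, huniq, fun g => path (hamming g p) g rfl⟩
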